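/- arXiv:1705.02185 — 15 statements merged into one kernel-verified Lean document; each statement's English description precedes it below -/
import Mathlib

section
/- For 0 ≤ v ≤ 1, the function g_v(t) = v(1-v)(t-1)/t^(v+1) on (0, ∞) satisfies: g_v is concave on (0, 1 + 2/v] and convex on [1 + 2/v, ∞) (for 0 < v ≤ 1). -/
/-! g_v = v(1-v) · h with v(1-v) ≥ 0 and h(t) = (t-1)/t^(v+1), whose second derivative
(v+1)(vt-(v+2))/t^(v+3) changes sign exactly at t = 1 + 2/v. -/

open Set

lemma hasDerivAt_sub_one_div_rpow (v : ℝ) {t : ℝ} (ht : 0 < t) :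
    HasDerivAt (fun t : ℝ => (t - 1) / t ^ (v + 1)) ((v + 1 - v * t) / t ^ (v + 2)) t := by
  have hden := Real.hasDerivAt_rpow_const (p := v + 1) (Or.inl ht.ne')
  refine (((hasDerivAt_id t).sub_const 1).div hden (Real.rpow_pos_of_pos ht _).ne').congr_deriv ?_
  rw [show v + 1 - 1 = v by ring, show v + 2 = v + 1 + 1 by ring]
  simp only [id, Real.rpow_add_one ht.ne']
  field_simp
  ring

lemma hasDerivAt_deriv_sub_one_div_rpow (v : ℝ) {t : ℝ} (ht : 0 < t) :
    HasDerivAt (fun t : ℝ => (v + 1 - v * t) / t ^ (v + 2))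
      ((v + 1) * (v * t - (v + 2)) / t ^ (v + 3)) t := by
  have hden := Real.hasDerivAt_rpow_const (p := v + 2) (Or.inl ht.ne')
  refine ((((hasDerivAt_id t).const_mul v).const_sub (v + 1)).div hden
    (Real.rpow_pos_of_pos ht _).ne').congr_deriv ?_
  rw [show v + 2 - 1 = v + 1 by ring, show v + 3 = v + 1 + 1 + 1 by ring,
    show v + 2 = v + 1 + 1 by ring]
  simp only [id, Real.rpow_add_one ht.ne']
  field_simp
  ring

lemma continuousOn_sub_one_div_rpow (v : ℝ) :
    ContinuousOn (fun t : ℝ => (t - 1) / t ^ (v + 1)) (Ioi 0) := fun _ ht =>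
  (hasDerivAt_sub_one_div_rpow v ht).continuousAt.continuousWithinAt

lemma concaveOn_sub_one_div_rpow {v : ℝ} (hv : 0 < v) :
    ConcaveOn ℝ (Ioc 0 (1 + 2 / v)) (fun t : ℝ => (t - 1) / t ^ (v + 1)) := by
  refine concaveOn_of_hasDerivWithinAt2_nonpos (convex_Ioc _ _)
    ((continuousOn_sub_one_div_rpow v).mono Ioc_subset_Ioi_self)
    (fun x hx => (hasDerivAt_sub_one_div_rpow v (interior_subset hx).1).hasDerivWithinAt)
    (fun x hx => (hasDerivAt_deriv_sub_one_div_rpow v (interior_subset hx).1).hasDerivWithinAt)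
    fun x hx => ?_
  rw [interior_Ioc] at hx
  have hvx : v * x < v + 2 := by
    calc v * x < v * (1 + 2 / v) := mul_lt_mul_of_pos_left hx.2 hv
      _ = v + 2 := by field_simp
  exact div_nonpos_of_nonpos_of_nonneg (mul_nonpos_of_nonneg_of_nonpos (by linarith) (by linarith))
    (Real.rpow_pos_of_pos hx.1 _).le

lemma convexOn_sub_one_div_rpow {v : ℝ} (hv : 0 < v) :
    ConvexOn ℝ (Ici (1 + 2 / v)) (fun t : ℝ => (t - 1) / t ^ (v + 1)) := by
  have hpos : Ici (1 + 2 / v) ⊆ Ioi 0 := Ici_subset_Ioi.mpr (by positivity)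
  refine convexOn_of_hasDerivWithinAt2_nonneg (convex_Ici _)
    ((continuousOn_sub_one_div_rpow v).mono hpos)
    (fun x hx => (hasDerivAt_sub_one_div_rpow v (hpos (interior_subset hx))).hasDerivWithinAt)
    (fun x hx =>
      (hasDerivAt_deriv_sub_one_div_rpow v (hpos (interior_subset hx))).hasDerivWithinAt)
    fun x hx => ?_
  have hx0 : 0 < x := hpos (interior_subset hx)
  rw [interior_Ici] at hx
  have hvx : v + 2 < v * x := by
    calc v + 2 = v * (1 + 2 / v) := by field_simp
      _ < v * x := mul_lt_mul_of_pos_left hx hv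
  exact div_nonneg (mul_nonneg (by linarith) (by linarith)) (Real.rpow_pos_of_pos hx0 _).le

theorem gv_concave_convex (v : ℝ) (hv0 : 0 < v) (hv1 : v ≤ 1) :
    ConcaveOn ℝ (Set.Ioc (0 : ℝ) (1 + 2 / v))
      (fun t : ℝ => v * (1 - v) * (t - 1) / t ^ (v + 1)) ∧
    ConvexOn ℝ (Set.Ici (1 + 2 / v))
      (fun t : ℝ => v * (1 - v) * (t - 1) / t ^ (v + 1)) := by
  have hc : 0 ≤ v * (1 - v) := mul_nonneg hv0.le (by linarith)
  simp_rw [mul_div_assoc]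
  exact ⟨(concaveOn_sub_one_div_rpow hv0).smul hc, (convexOn_sub_one_div_rpow hv0).smul hc⟩
end

section
/- For every real x ≥ 1 and 0 ≤ v ≤ 1, we have v(x-1)(1 - x^(v-1))/2 + x^v ≤ (1-v) + v x ≤ v(x-1)(1 - ((1+x)/2)^(v-1)) + x^v. -/
/-!
With `G t = v t - t ^ v`, the middle term minus `x ^ v` is `G x - G 1`, and `G' = g` with
`g t = v (1 - t ^ (v - 1))`, which is concave because `t ^ (v - 1)` is convex for `v - 1 ≤ 0`,
and vanishes at `1`. The two inequalities are then the Hermite–Hadamard inequalities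
`(x - 1) (g 1 + g x) / 2 ≤ ∫₁ˣ g ≤ (x - 1) g ((1 + x) / 2)` for the concave `g`. Each is
proved by showing that the difference of its sides, as a function of `x`, is monotone: its
derivative is nonnegative because tangents of a concave function lie above its graph.
-/

open Set Real

section HermiteHadamard

variable {G g g' : ℝ → ℝ} {a b : ℝ}

theorem ConcaveOn.trapezoid_le_sub_of_hasDerivAt (hg : ConcaveOn ℝ (Icc a b) g)
    (hG : ∀ t ∈ Icc a b, HasDerivAt G (g t) t) (hg' : ∀ t ∈ Icc a b, HasDerivAt g (g' t) t)
    (hab : a ≤ b) : (b - a) * (g a + g b) / 2 ≤ G b - G a := by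
  set φ : ℝ → ℝ := fun t => G t - G a - (t - a) * (g a + g t) / 2
  have hφ : ∀ t ∈ Icc a b, HasDerivAt φ ((g t - g a - (t - a) * g' t) / 2) t := by
    intro t ht
    have hchord := (((hasDerivAt_id' t).sub_const a).fun_mul
      ((hg' t ht).const_add (g a))).div_const 2
    exact (((hG t ht).sub_const (G a)).fun_sub hchord).congr_deriv (by ring)
  have hmono : MonotoneOn φ (Icc a b) := by
    refine monotoneOn_of_hasDerivWithinAt_nonneg (convex_Icc a b)
      (fun t ht => (hφ t ht).continuousAt.continuousWithinAt)
      (fun t ht => (hφ t (interior_subset ht)).hasDerivWithinAt) ?_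
    rw [interior_Icc]
    rintro t ⟨hat, htb⟩
    have hslope := hg.le_slope_of_hasDerivAt (left_mem_Icc.2 hab) ⟨hat.le, htb.le⟩ hat
      (hg' t ⟨hat.le, htb.le⟩)
    rw [slope_def_field, le_div_iff₀ (sub_pos.2 hat)] at hslope
    linarith
  have hφab := hmono (left_mem_Icc.2 hab) (right_mem_Icc.2 hab) hab
  simp only [φ, sub_self, zero_mul, zero_div] at hφab
  linarith

theorem ConcaveOn.sub_le_midpoint_of_hasDerivAt (hg : ConcaveOn ℝ (Icc a b) g)
    (hG : ∀ t ∈ Icc a b, HasDerivAt G (g t) t) (hg' : ∀ t ∈ Icc a b, HasDerivAt g (g' t) t)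
    (hab : a ≤ b) : G b - G a ≤ (b - a) * g ((a + b) / 2) := by
  have hmid : ∀ t ∈ Icc a b, (a + t) / 2 ∈ Icc a b := fun t ht =>
    ⟨by linarith [ht.1], by linarith [ht.2]⟩
  set ψ : ℝ → ℝ := fun t => (t - a) * g ((a + t) / 2) - (G t - G a)
  have hψ : ∀ t ∈ Icc a b,
      HasDerivAt ψ (g ((a + t) / 2) + (t - a) / 2 * g' ((a + t) / 2) - g t) t := by
    intro t ht
    have hgm : HasDerivAt (fun s => g ((a + s) / 2)) (g' ((a + t) / 2) * (1 / 2)) t :=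
      (hg' _ (hmid t ht)).comp t (((hasDerivAt_id t).const_add a).div_const 2)
    exact ((((hasDerivAt_id' t).sub_const a).fun_mul hgm).fun_sub
      ((hG t ht).sub_const (G a))).congr_deriv (by ring)
  have hmono : MonotoneOn ψ (Icc a b) := by
    refine monotoneOn_of_hasDerivWithinAt_nonneg (convex_Icc a b)
      (fun t ht => (hψ t ht).continuousAt.continuousWithinAt)
      (fun t ht => (hψ t (interior_subset ht)).hasDerivWithinAt) ?_
    rw [interior_Icc]
    rintro t ⟨hat, htb⟩
    have hmt : (a + t) / 2 < t := by linarith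
    have hslope := hg.slope_le_of_hasDerivAt (hmid t ⟨hat.le, htb.le⟩) ⟨hat.le, htb.le⟩ hmt
      (hg' _ (hmid t ⟨hat.le, htb.le⟩))
    rw [slope_def_field, div_le_iff₀ (sub_pos.2 hmt)] at hslope
    linarith
  have hψab := hmono (left_mem_Icc.2 hab) (right_mem_Icc.2 hab) hab
  simp only [ψ, sub_self, zero_mul] at hψab
  linarith

end HermiteHadamard

theorem convexOn_rpow_of_nonpos {p : ℝ} (hp : p ≤ 0) :
    ConvexOn ℝ (Ioi 0) fun x : ℝ => x ^ p := by
  have hd : ∀ x ∈ Ioi (0 : ℝ), HasDerivAt (fun x : ℝ => x ^ p) (p * x ^ (p - 1)) x :=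
    fun x hx => hasDerivAt_rpow_const (Or.inl (ne_of_gt hx))
  refine MonotoneOn.convexOn_of_deriv (convex_Ioi 0)
    (fun x hx => (hd x hx).continuousAt.continuousWithinAt) ?_ ?_ <;> rw [interior_Ioi]
  · exact fun x hx => (hd x hx).differentiableAt.differentiableWithinAt
  · rw [deriv_rpow_const']
    exact fun x hx y _ hxy =>
      mul_le_mul_of_nonpos_left (rpow_le_rpow_of_nonpos hx hxy (by linarith)) hp

theorem young_additive_refine (x v : ℝ) (hx : 1 ≤ x) (hv0 : 0 ≤ v) (hv1 : v ≤ 1) :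
    v * (x - 1) * (1 - x ^ (v - 1)) / 2 + x ^ v ≤ (1 - v) + v * x ∧
    (1 - v) + v * x ≤ v * (x - 1) * (1 - ((1 + x) / 2) ^ (v - 1)) + x ^ v := by
  set g : ℝ → ℝ := fun t => v - v * t ^ (v - 1)
  have hpos : Icc 1 x ⊆ Ioi 0 := fun t ht => one_pos.trans_le ht.1
  have hg : ConcaveOn ℝ (Icc 1 x) g :=
    ((concaveOn_const v (convex_Ioi 0)).sub
      ((convexOn_rpow_of_nonpos (by linarith : v - 1 ≤ 0)).smul hv0)).subset hpos (convex_Icc 1 x)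
  have hG : ∀ t ∈ Icc 1 x, HasDerivAt (fun t => v * t - t ^ v) (g t) t := fun t ht =>
    (((hasDerivAt_id' t).const_mul v).fun_sub
      (hasDerivAt_rpow_const (Or.inl (hpos ht).ne'))).congr_deriv (by ring)
  have hg' : ∀ t ∈ Icc 1 x, HasDerivAt g (-(v * ((v - 1) * t ^ (v - 1 - 1)))) t := fun t ht =>
    ((hasDerivAt_rpow_const (Or.inl (hpos ht).ne')).const_mul v).const_sub v
  have lower := hg.trapezoid_le_sub_of_hasDerivAt hG hg' hx
  have upper := hg.sub_le_midpoint_of_hasDerivAt hG hg' hx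
  simp only [g, one_rpow] at lower upper
  constructor <;> linarith
end

section
/- For every real x with 0 < x ≤ 1 and 0 ≤ v ≤ 1, we have m_v(x) · x^v ≤ (1-v) + v x ≤ M_v(x) · x^v, where m_v(x) = 1 + 2^v · v(1-v)(x-1)^2/(x+1)^(v+1) and M_v(x) = 1 + v(1-v)(x-1)^2/(2 x^(v+1)). -/
/-!
The gap `(1 - v) + v x - x ^ v` is Taylor's remainder of `t ↦ t ^ v` at `1`:
it equals `v (1 - v) ∫_x^1 (t - x) t ^ (v - 2) dt`. For the upper bound, `t ^ v ≤ 1` and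
`(t - x) / t ^ 2 ≤ (t ^ 2 - x ^ 2) / (2 x t ^ 2)` bound the integral by `(1 - x) ^ 2 / (2 x)`.
For the lower bound, Jensen's inequality for the convex `t ↦ t ^ (v - 2)` against the weight
`t - x`, whose barycentre on `[x, 1]` is `(2 + x) / 3`, bounds the integral below by
`(1 - x) ^ 2 / 2 · ((2 + x) / 3) ^ (v - 2)`; an elementary comparison of powers
(`x ≤ ((x + 1) / 2) ((2 + x) / 3)` and `((2 + x) / 3) ^ 2 ≤ (x + 1) / 2`) turns this into
the stated bound.
-/

open Real intervalIntegral Set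

namespace Real

-- Bernoulli's inequality at `1 / u` with exponent `-p ≥ 1`, followed by `u + 1 / u ≥ 2`.
theorem one_add_mul_sub_one_le_rpow_of_le_neg_one {u p : ℝ} (hu : 0 < u) (hp : p ≤ -1) :
    1 + p * (u - 1) ≤ u ^ p := by
  have h := one_add_mul_self_le_rpow_one_add (s := u⁻¹ - 1) (by linarith [inv_pos.2 hu])
    (le_neg_of_le_neg hp)
  rw [add_sub_cancel, inv_rpow hu.le, ← rpow_neg hu.le, neg_neg] at h
  have hsq : 0 ≤ -p * ((u - 1) ^ 2 / u) := mul_nonneg (by linarith) (by positivity)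
  have hexp : -p * (u⁻¹ - 1) = p * (u - 1) + -p * ((u - 1) ^ 2 / u) := by
    field_simp
    ring
  linarith

theorem rpow_add_mul_sub_le_rpow_of_le_neg_one {c t p : ℝ} (hc : 0 < c) (ht : 0 < t)
    (hp : p ≤ -1) : c ^ p + p * c ^ (p - 1) * (t - c) ≤ t ^ p := by
  have h := one_add_mul_sub_one_le_rpow_of_le_neg_one (div_pos ht hc) hp
  rw [div_rpow ht.le hc.le, le_div_iff₀ (rpow_pos_of_pos hc p)] at h
  calc c ^ p + p * c ^ (p - 1) * (t - c) = (1 + p * (t / c - 1)) * c ^ p := by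
        rw [rpow_sub_one hc.ne']
        field_simp
    _ ≤ t ^ p := h

end Real

-- `(x + 2 y) / 3` is the barycentre of the weight `t - x` on `[x, y]`.
theorem integral_sub_mul_affine (x y a b : ℝ) :
    ∫ t in x..y, (t - x) * (a + b * (t - (x + 2 * y) / 3)) = a * (y - x) ^ 2 / 2 := by
  have hderiv : ∀ t ∈ uIcc x y, HasDerivAt (fun t => (t - x) ^ 2 * (a / 2 + b * (t - y) / 3))
      ((t - x) * (a + b * (t - (x + 2 * y) / 3))) t := by
    intro t _
    exact ((((hasDerivAt_id t).sub_const x).pow 2).mul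
      ((((hasDerivAt_id t).sub_const y).const_mul b).div_const 3 |>.const_add (a / 2))).congr_deriv
      (by simp only [id, Pi.pow_apply]; ring)
  rw [integral_eq_sub_of_hasDerivAt hderiv (Continuous.intervalIntegrable (by fun_prop) _ _)]
  ring

theorem intervalIntegrable_sub_mul_rpow {x : ℝ} (hx : 0 < x) (v : ℝ) :
    IntervalIntegrable (fun t => (t - x) * t ^ (v - 2)) MeasureTheory.volume x 1 :=
  ((continuousOn_id.sub continuousOn_const).mul (continuousOn_id.rpow_const fun _ ht =>
    Or.inl (lt_min hx one_pos |>.trans_le ht.1).ne')).intervalIntegrable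

theorem one_sub_add_mul_sub_rpow_eq_mul_integral {x : ℝ} (hx : 0 < x) (v : ℝ) :
    1 - v + v * x - x ^ v = v * (1 - v) * ∫ t in x..1, (t - x) * t ^ (v - 2) := by
  have hderiv : ∀ t ∈ uIcc x 1, HasDerivAt (fun t => (1 - v) * t ^ v + v * x * t ^ (v - 1))
      (v * (1 - v) * ((t - x) * t ^ (v - 2))) t := by
    intro t ht
    have ht0 : t ≠ 0 := (lt_min hx one_pos |>.trans_le ht.1).ne'
    refine (((hasDerivAt_rpow_const (p := v) (Or.inl ht0)).const_mul (1 - v)).add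
      ((hasDerivAt_rpow_const (p := v - 1) (Or.inl ht0)).const_mul (v * x))).congr_deriv ?_
    rw [show v - 1 - 1 = v - 2 by ring, show v - 1 = v - 2 + 1 by ring, rpow_add_one ht0]
    ring
  rw [← integral_const_mul, integral_eq_sub_of_hasDerivAt hderiv
    ((intervalIntegrable_sub_mul_rpow hx v).const_mul _), one_rpow, one_rpow, rpow_sub_one hx.ne']
  field_simp
  ring

theorem integral_sub_mul_rpow_le {x v : ℝ} (hx0 : 0 < x) (hx1 : x ≤ 1) (hv : 0 ≤ v) :
    ∫ t in x..1, (t - x) * t ^ (v - 2) ≤ (1 - x) ^ 2 / (2 * x) := by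
  have hpos : ∀ t ∈ uIcc x 1, 0 < t := fun t ht => (uIcc_of_le hx1 ▸ ht).1 |> hx0.trans_le
  have hbound : ∀ t ∈ Icc x 1, (t - x) * t ^ (v - 2) ≤ (1 - x ^ 2 / t ^ 2) / (2 * x) := by
    intro t ⟨hxt, ht1⟩
    have ht : 0 < t := hx0.trans_le hxt
    have hsplit : (1 - x ^ 2 / t ^ 2) / (2 * x)
        = (t - x) / t ^ 2 + (t - x) ^ 2 / (2 * x * t ^ 2) := by
      field_simp
      ring
    have hdrop : (t - x) * t ^ (v - 2) ≤ (t - x) / t ^ 2 := by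
      rw [rpow_sub ht, rpow_two, mul_div, div_le_div_iff_of_pos_right (by positivity)]
      exact mul_le_of_le_one_right (sub_nonneg.2 hxt) (rpow_le_one ht.le ht1 hv)
    have hsq : 0 ≤ (t - x) ^ 2 / (2 * x * t ^ 2) := by positivity
    linarith
  have hderiv : ∀ t ∈ uIcc x 1,
      HasDerivAt (fun t => (t + x ^ 2 * t⁻¹) / (2 * x)) ((1 - x ^ 2 / t ^ 2) / (2 * x)) t := by
    intro t ht
    exact (((hasDerivAt_id t).add ((hasDerivAt_inv (hpos t ht).ne').const_mul (x ^ 2))).div_const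
      (2 * x)).congr_deriv (by ring)
  have hcont : ContinuousOn (fun t => (1 - x ^ 2 / t ^ 2) / (2 * x)) (uIcc x 1) :=
    (continuousOn_const.sub (continuousOn_const.div (continuousOn_pow 2)
      fun t ht => pow_ne_zero 2 (hpos t ht).ne')).div_const _
  calc ∫ t in x..1, (t - x) * t ^ (v - 2) ≤ ∫ t in x..1, (1 - x ^ 2 / t ^ 2) / (2 * x) :=
        integral_mono_on hx1 (intervalIntegrable_sub_mul_rpow hx0 v) hcont.intervalIntegrable
          hbound
    _ = (1 - x) ^ 2 / (2 * x) := by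
        rw [integral_eq_sub_of_hasDerivAt hderiv hcont.intervalIntegrable]
        field_simp
        ring

theorem le_integral_sub_mul_rpow {x v : ℝ} (hx0 : 0 < x) (hx1 : x ≤ 1) (hv : v ≤ 1) :
    (1 - x) ^ 2 / 2 * ((2 + x) / 3) ^ (v - 2) ≤ ∫ t in x..1, (t - x) * t ^ (v - 2) := by
  set c := (2 + x) / 3 with hc_def
  have hc : 0 < c := by positivity
  have htangent : ∀ t ∈ Icc x 1,
      (t - x) * (c ^ (v - 2) + (v - 2) * c ^ (v - 2 - 1) * (t - c)) ≤ (t - x) * t ^ (v - 2) :=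
    fun t ht => mul_le_mul_of_nonneg_left
      (rpow_add_mul_sub_le_rpow_of_le_neg_one hc (hx0.trans_le ht.1) (by linarith))
      (sub_nonneg.2 ht.1)
  calc (1 - x) ^ 2 / 2 * c ^ (v - 2)
      = ∫ t in x..1, (t - x) * (c ^ (v - 2) + (v - 2) * c ^ (v - 2 - 1) * (t - c)) := by
        rw [hc_def, show (2 + x) / 3 = (x + 2 * 1) / 3 by ring, integral_sub_mul_affine]
        ring
    _ ≤ ∫ t in x..1, (t - x) * t ^ (v - 2) :=
        integral_mono_on hx1 (Continuous.intervalIntegrable (by fun_prop) _ _)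
          (intervalIntegrable_sub_mul_rpow hx0 v) htangent

theorem two_rpow_mul_rpow_div_add_one_rpow_le {x v : ℝ} (hx0 : 0 < x) (hx1 : x ≤ 1)
    (hv : 0 ≤ v) : 2 ^ v * x ^ v / (x + 1) ^ (v + 1) ≤ ((2 + x) / 3) ^ (v - 2) / 2 := by
  set a := (x + 1) / 2 with ha_def
  set c := (2 + x) / 3 with hc_def
  have ha : 0 < a := by positivity
  have hc : 0 < c := by positivity
  have hxac : x ≤ a * c := by rw [ha_def, hc_def]; nlinarith
  have hca : c ^ 2 ≤ a := by rw [ha_def, hc_def]; nlinarith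
  have hnum : x ^ v ≤ a ^ v * c ^ v := mul_rpow ha.le hc.le ▸ rpow_le_rpow hx0.le hxac hv
  have key : x ^ v * c ^ 2 ≤ a ^ v * a * c ^ v :=
    calc x ^ v * c ^ 2 ≤ (a ^ v * c ^ v) * a := mul_le_mul hnum hca (by positivity) (by positivity)
      _ = a ^ v * a * c ^ v := by ring
  have hden : (x + 1) ^ (v + 1) = 2 * 2 ^ v * (a ^ v * a) := by
    rw [show x + 1 = 2 * a by ring, mul_rpow zero_le_two ha.le, rpow_add_one two_ne_zero,
      rpow_add_one ha.ne']
    ring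
  rw [hden, rpow_sub hc, rpow_two]
  field_simp
  linarith

theorem young_multiplicative_refine (x v : ℝ) (hx0 : 0 < x) (hx1 : x ≤ 1)
    (hv0 : 0 ≤ v) (hv1 : v ≤ 1) :
    (1 + (2 : ℝ) ^ v * v * (1 - v) * (x - 1) ^ 2 / (x + 1) ^ (v + 1)) * x ^ v
      ≤ (1 - v) + v * x ∧
    (1 - v) + v * x
      ≤ (1 + v * (1 - v) * (x - 1) ^ 2 / (2 * x ^ (v + 1))) * x ^ v := by
  have hgap := one_sub_add_mul_sub_rpow_eq_mul_integral hx0 v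
  have hvv : 0 ≤ v * (1 - v) := mul_nonneg hv0 (sub_nonneg.2 hv1)
  constructor
  · have hpow := mul_le_mul_of_nonneg_left (two_rpow_mul_rpow_div_add_one_rpow_le hx0 hx1 hv0)
      (mul_nonneg hvv (sq_nonneg (x - 1)))
    have hint := mul_le_mul_of_nonneg_left (le_integral_sub_mul_rpow hx0 hx1 hv1) hvv
    calc (1 + 2 ^ v * v * (1 - v) * (x - 1) ^ 2 / (x + 1) ^ (v + 1)) * x ^ v
        = x ^ v + v * (1 - v) * (x - 1) ^ 2 * (2 ^ v * x ^ v / (x + 1) ^ (v + 1)) := by ring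
      _ ≤ x ^ v + v * (1 - v) * ((1 - x) ^ 2 / 2 * ((2 + x) / 3) ^ (v - 2)) := by linarith
      _ ≤ 1 - v + v * x := by linarith
  · have hint := mul_le_mul_of_nonneg_left (integral_sub_mul_rpow_le hx0 hx1 hv0) hvv
    calc 1 - v + v * x ≤ x ^ v + v * (1 - v) * ((1 - x) ^ 2 / (2 * x)) := by linarith
      _ = (1 + v * (1 - v) * (x - 1) ^ 2 / (2 * x ^ (v + 1))) * x ^ v := by
        rw [rpow_add_one hx0.ne']
        field_simp
        ring
end

section
/- For fixed 0 ≤ v ≤ 1, the function m_v(x) = 1 + 2^v · v(1-v)(x-1)^2/(x+1)^(v+1) is decreasing on (0, 1], and m_v(x) ≥ 1 for all 0 < x ≤ 1. -/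
theorem mv_decreasing_ge_one (v : ℝ) (hv0 : 0 ≤ v) (hv1 : v ≤ 1) :
    AntitoneOn (fun x : ℝ => 1 + (2 : ℝ) ^ v * v * (1 - v) * (x - 1) ^ 2 / (x + 1) ^ (v + 1))
      (Set.Ioc (0 : ℝ) 1) ∧
    ∀ x : ℝ, 0 < x → x ≤ 1 →
      1 ≤ 1 + (2 : ℝ) ^ v * v * (1 - v) * (x - 1) ^ 2 / (x + 1) ^ (v + 1) := by
  have hc : 0 ≤ (2 : ℝ) ^ v * v * (1 - v) := by
    apply mul_nonneg (mul_nonneg (Real.rpow_nonneg (by norm_num) v) hv0) (by linarith)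
  constructor
  · intro x hx y hy hxy
    simp only [Set.mem_Ioc] at hx hy
    have hxpos : (0 : ℝ) < x + 1 := by linarith [hx.1]
    have hypos : (0 : ℝ) < y + 1 := by linarith [hy.1]
    have hden : (x + 1 : ℝ) ^ (v + 1) ≤ (y + 1) ^ (v + 1) :=
      Real.rpow_le_rpow (le_of_lt hxpos) (by linarith) (by linarith)
    have hdpos : (0 : ℝ) < (x + 1) ^ (v + 1) := Real.rpow_pos_of_pos hxpos _
    have hnum : (y - 1) ^ 2 ≤ (x - 1) ^ 2 := by nlinarith [hx.2, hy.2, hxy]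
    simp only
    gcongr 1 + ?_
    apply div_le_div₀ (mul_nonneg hc (sq_nonneg _)) _ hdpos hden
    exact mul_le_mul_of_nonneg_left hnum hc
  · intro x hx0 hx1
    have hdpos : (0 : ℝ) < (x + 1) ^ (v + 1) := Real.rpow_pos_of_pos (by linarith) _
    have := div_nonneg (mul_nonneg hc (sq_nonneg (x - 1))) (le_of_lt hdpos)
    linarith
end

section
/- Let x > 0 and 0 ≤ v ≤ 1 with x^v ≥ 1/2. Then M_v(x) ≤ K(x), where M_v(x) = 1 + v(1-v)(x-1)^2/(2 x^(v+1)) and K(x) = (x+1)^2/(4x) is the Kantorovich constant. -/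
theorem Mv_le_K (x v : ℝ) (hx : 0 < x) (hv0 : 0 ≤ v) (hv1 : v ≤ 1)
    (hxv : (1 : ℝ) / 2 ≤ x ^ v) :
    1 + v * (1 - v) * (x - 1) ^ 2 / (2 * x ^ (v + 1)) ≤ (x + 1) ^ 2 / (4 * x) := by
  have ht : (0:ℝ) < x ^ v := lt_of_lt_of_le (by norm_num) hxv
  have hsplit : x ^ (v + 1) = x ^ v * x := by
    rw [Real.rpow_add hx, Real.rpow_one]
  have key : 2 * v * (1 - v) ≤ x ^ v := by nlinarith [sq_nonneg (2*v - 1)]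
  rw [hsplit]
  have h2 : v * (1 - v) * (x - 1) ^ 2 / (2 * (x ^ v * x)) ≤ (x - 1) ^ 2 / (4 * x) := by
    rw [div_le_div_iff₀ (by positivity) (by positivity)]
    nlinarith [mul_nonneg (sub_nonneg.2 key) (mul_nonneg hx.le (sq_nonneg (x-1)))]
  have h3 : (x + 1) ^ 2 / (4 * x) = 1 + (x - 1) ^ 2 / (4 * x) := by
    field_simp; ring
  rw [h3]
  linarith
end

section
/- For 0 ≤ v ≤ 1/2 and 0 < x ≤ 1, we have M_v(x) ≤ exp(4v(1-v)(K(x) - 1)), where M_v(x) = 1 + v(1-v)(x-1)^2/(2 x^(v+1)) and K(x) = (x+1)^2/(4x). -/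
/-!
Put `t = v(1-v)(x-1)²/x`; the exponent on the right is exactly `t`, and the left side is
`1 + (t/2) x^(-v)`. Writing `x = e^(2s)` gives `(x-1)²/x = (2 sinh s)² ≥ (log x)²`, so `t` dominates
`v(log x)²/2`, and completing the square turns this into `x^(-v) ≤ 2 e^(t/2)`. It remains to see
`1 + t e^(t/2) ≤ e^t`, which is `t ≤ 2 sinh(t/2)` multiplied by `e^(t/2)`.
-/

open Real

lemma Real.one_add_mul_exp_half_le_exp {t : ℝ} (ht : 0 ≤ t) : 1 + t * exp (t / 2) ≤ exp t := by
  have hsinh : t / 2 ≤ sinh (t / 2) := self_le_sinh_iff.2 (by linarith)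
  calc 1 + t * exp (t / 2) ≤ 1 + 2 * sinh (t / 2) * exp (t / 2) := by gcongr; linarith
    _ = exp (t / 2 + t / 2) := by
      rw [sinh_eq, exp_neg, exp_add]
      field_simp
      ring
    _ = exp t := by rw [add_halves]

lemma Real.log_sq_le_sq_sub_one_div {x : ℝ} (hx : 0 < x) : log x ^ 2 ≤ (x - 1) ^ 2 / x := by
  set s := log x / 2
  have hx_eq : x = exp s * exp s := by rw [← exp_add, add_halves, exp_log hx]
  have hs : |s| ≤ |sinh s| := by rw [abs_sinh]; exact self_le_sinh_iff.2 (abs_nonneg s)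
  calc log x ^ 2 = (2 * s) ^ 2 := by rw [mul_div_cancel₀ _ two_ne_zero]
    _ ≤ (2 * sinh s) ^ 2 := by
      rw [sq_le_sq, abs_mul, abs_mul]; gcongr
    _ = (x - 1) ^ 2 / x := by
      rw [sinh_eq, exp_neg, hx_eq]
      field_simp

lemma Real.rpow_neg_le_two_mul_exp {x v : ℝ} (hx : 0 < x) (hv0 : 0 ≤ v) (hv1 : v ≤ 1 / 2) :
    x ^ (-v) ≤ 2 * exp (v * (1 - v) * ((x - 1) ^ 2 / x) / 2) := by
  have hlog := log_sq_le_sq_sub_one_div hx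
  have hlog2 : 1 / 2 < log 2 := by linarith [log_two_gt_d9]
  have hw : 0 ≤ v * (1 - v) := mul_nonneg hv0 (by linarith)
  -- `-v L ≤ v L²/4 + v` is `v (L + 2)² ≥ 0`, and `v ≤ 1/2 < log 2`.
  have hexponent : log x * -v ≤ log 2 + v * (1 - v) * ((x - 1) ^ 2 / x) / 2 := by
    nlinarith [mul_nonneg hv0 (sq_nonneg (log x + 2)), mul_le_mul_of_nonneg_left hlog hw,
      mul_nonneg hv0 (sq_nonneg (log x))]
  calc x ^ (-v) = exp (log x * -v) := rpow_def_of_pos hx _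
    _ ≤ exp (log 2 + v * (1 - v) * ((x - 1) ^ 2 / x) / 2) := exp_le_exp.2 hexponent
    _ = 2 * exp (v * (1 - v) * ((x - 1) ^ 2 / x) / 2) := by rw [exp_add, exp_log two_pos]

theorem Mv_le_exp_dragomir_general (x v : ℝ) (hv0 : 0 ≤ v) (hv1 : v ≤ 1 / 2)
    (hx0 : 0 < x) :
    1 + v * (1 - v) * (x - 1) ^ 2 / (2 * x ^ (v + 1))
      ≤ Real.exp (4 * v * (1 - v) * ((x + 1) ^ 2 / (4 * x) - 1)) := by
  set t := v * (1 - v) * ((x - 1) ^ 2 / x) with ht_def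
  have ht : 0 ≤ t := mul_nonneg (mul_nonneg hv0 (by linarith)) (by positivity)
  have hlhs : v * (1 - v) * (x - 1) ^ 2 / (2 * x ^ (v + 1)) = t / 2 * x ^ (-v) := by
    rw [ht_def, rpow_add hx0, rpow_one, rpow_neg hx0.le]
    field_simp
  have hexponent : 4 * v * (1 - v) * ((x + 1) ^ 2 / (4 * x) - 1) = t := by
    rw [ht_def]
    field_simp
    ring
  rw [hlhs, hexponent]
  calc 1 + t / 2 * x ^ (-v) ≤ 1 + t / 2 * (2 * exp (t / 2)) := by
        gcongr; exact rpow_neg_le_two_mul_exp hx0 hv0 hv1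
    _ = 1 + t * exp (t / 2) := by ring
    _ ≤ exp t := one_add_mul_exp_half_le_exp ht

theorem Mv_le_exp_dragomir (x v : ℝ) (hv0 : 0 ≤ v) (hv1 : v ≤ 1 / 2)
    (hx0 : 0 < x) (hx1 : x ≤ 1) :
    1 + v * (1 - v) * (x - 1) ^ 2 / (2 * x ^ (v + 1))
      ≤ Real.exp (4 * v * (1 - v) * ((x + 1) ^ 2 / (4 * x) - 1)) :=
  Mv_le_exp_dragomir_general x v hv0 hv1 hx0
end

section
/- For t ≥ 1 and 0 ≤ v ≤ 1/2, we have 2t - t^(v+1) + v(1-v)(t-1)^2 ≥ 0. -/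
theorem g_v_nonneg (t v : ℝ) (ht : 1 ≤ t) (hv0 : 0 ≤ v) (hv1 : v ≤ 1 / 2) :
    0 ≤ 2 * t - t ^ (v + 1) + v * (1 - v) * (t - 1) ^ 2 := by
  have ht0 : (0:ℝ) < t := by linarith
  set s := Real.sqrt t with hsdef
  have hs : s ^ 2 = t := Real.sq_sqrt ht0.le
  have hs1 : 1 ≤ s := by
    rw [hsdef, show (1:ℝ) = Real.sqrt 1 by simp]
    exact Real.sqrt_le_sqrt ht
  -- convexity of exp: t^v ≤ (1-2v) + 2v * s
  have key : t ^ v ≤ (1 - 2*v) + 2*v*s := by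
    have hc := convexOn_exp.2 (Set.mem_univ (0:ℝ)) (Set.mem_univ (Real.log t / 2))
      (by linarith : (0:ℝ) ≤ 1 - 2*v) (by linarith : (0:ℝ) ≤ 2*v) (by ring)
    have h1 : (1 - 2*v) • (0:ℝ) + (2*v) • (Real.log t / 2) = v * Real.log t := by
      simp; ring
    rw [h1] at hc
    have h2 : Real.exp (Real.log t / 2) = s := by
      rw [hsdef, Real.sqrt_eq_rpow, Real.rpow_def_of_pos ht0]
      ring_nf
    have h3 : t ^ v = Real.exp (v * Real.log t) := by
      rw [Real.rpow_def_of_pos ht0]; ring_nf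
    rw [h3]
    simpa [h2, mul_comm] using hc
  have hsplit : t ^ (v + 1) = t ^ v * t := by
    rw [Real.rpow_add ht0, Real.rpow_one]
  rw [hsplit]
  have hmul : t ^ v * t ≤ ((1 - 2*v) + 2*v*s) * t :=
    mul_le_mul_of_nonneg_right key ht0.le
  have main : 0 ≤ 2*t - ((1 - 2*v) + 2*v*s)*t + v*(1-v)*(t-1)^2 := by
    rw [← hs]
    rcases le_or_gt 0 (s^4 - 4*s^3 + 2*s^2 + 1) with h | h
    · nlinarith [mul_nonneg hv0 h, sq_nonneg s,
        mul_nonneg (mul_nonneg hv0 (by linarith : (0:ℝ) ≤ 1/2 - v)) (sq_nonneg (s^2-1))]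
    · nlinarith [sq_nonneg ((s-1)^2),
        mul_nonneg (by linarith : (0:ℝ) ≤ 1/2 - v) (by linarith : (0:ℝ) ≤ -(s^4 - 4*s^3 + 2*s^2 + 1)),
        mul_nonneg (mul_nonneg hv0 (by linarith : (0:ℝ) ≤ 1/2 - v)) (sq_nonneg (s^2-1)), hs1]
  linarith [main, hmul]
end

section
/- For every x ≥ 1, we have ((x+1)/2)^(2/3) ≥ ((√x + 1)/(2√x)) · (1 + log((x+1)/2)). -/
theorem lemma_0326 (x : ℝ) (hx : 1 ≤ x) :
    ((Real.sqrt x + 1) / (2 * Real.sqrt x)) * (1 + Real.log ((x + 1) / 2))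
      ≤ ((x + 1) / 2) ^ ((2 : ℝ) / 3) := by
  set s := Real.sqrt x with hs
  have hs1 : 1 ≤ s := by
    rw [hs, show (1:ℝ) = Real.sqrt 1 by simp]
    exact Real.sqrt_le_sqrt hx
  have hs0 : 0 < s := lt_of_lt_of_le one_pos hs1
  have hsx : s ^ 2 = x := Real.sq_sqrt (le_trans zero_le_one hx)
  set t : ℝ := (x + 1) / 2 with ht
  have ht1 : 1 ≤ t := by rw [ht]; linarith
  have ht0 : 0 < t := lt_of_lt_of_le one_pos ht1
  set T : ℝ := t ^ ((2:ℝ)/3) with hT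
  have hT1 : 1 ≤ T := Real.one_le_rpow ht1 (by norm_num)
  have hT0 : 0 < T := lt_of_lt_of_le one_pos hT1
  -- T^3 = t^2
  have hT3 : T ^ (3:ℕ) = t ^ (2:ℕ) := by
    rw [hT, ← Real.rpow_natCast (t ^ ((2:ℝ)/3)) 3, ← Real.rpow_mul (le_of_lt ht0),
      ← Real.rpow_natCast t 2]
    norm_num
  -- log t ≤ (3/2)(T - 1)
  have hlog : Real.log t ≤ (3/2) * (T - 1) := by
    have h1 : Real.log T = (2/3) * Real.log t := by
      rw [hT, Real.log_rpow ht0]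
    have h2 : Real.log T ≤ T - 1 := Real.log_le_sub_one_of_pos hT0
    linarith
  have ha0 : 0 ≤ (s + 1) / (2 * s) := by positivity
  -- key: T * (3 - s) ≤ s + 1
  have hkey : T * (3 - s) ≤ s + 1 := by
    rcases le_or_gt s 3 with hc | hc
    · have hbn : (0:ℝ) ≤ 3 - s := by linarith
      have hcube : (T * (3 - s)) ^ (3:ℕ) ≤ (s + 1) ^ (3:ℕ) := by
        have : (T * (3 - s)) ^ (3:ℕ) = t ^ 2 * (3 - s) ^ 3 := by
          rw [mul_pow, hT3]
        rw [this, ht, ← hsx]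
        nlinarith [sq_nonneg (s - 1), sq_nonneg (s + 1), sq_nonneg (s^2 - 1),
          mul_nonneg (mul_nonneg (sub_nonneg.2 hs1) hbn) (sq_nonneg s),
          mul_nonneg (sub_nonneg.2 hs1) hbn, sq_nonneg (s^2 - 2*s),
          mul_nonneg (mul_nonneg (sub_nonneg.2 hs1) (sub_nonneg.2 hs1)) hbn]
      have := pow_le_pow_iff_left₀ (mul_nonneg (le_of_lt hT0) hbn)
        (by linarith : (0:ℝ) ≤ s + 1) (by norm_num : (3:ℕ) ≠ 0)
      exact this.mp hcube
    · nlinarith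
  calc (s + 1) / (2 * s) * (1 + Real.log t)
      ≤ (s + 1) / (2 * s) * (1 + (3/2) * (T - 1)) := by
        apply mul_le_mul_of_nonneg_left (by linarith) ha0
    _ ≤ T := by
        rw [div_mul_eq_mul_div, div_le_iff₀ (by positivity)]
        nlinarith [hkey]
end

section
/- For x ≥ 1 and 3/4 ≤ v ≤ 1, we have v(x-1)(1 - x^(v-1))/2 ≥ min{v, 1-v} · (1 - √x)^2. -/
theorem uv_nonneg (x v : ℝ) (hx : 1 ≤ x) (hv0 : 3 / 4 ≤ v) (hv1 : v ≤ 1) :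
    min v (1 - v) * (1 - Real.sqrt x) ^ 2 ≤ v * (x - 1) * (1 - x ^ (v - 1)) / 2 := by
  have hx0 : (0:ℝ) < x := by linarith
  have hmin : min v (1 - v) = 1 - v := min_eq_right (by linarith)
  rw [hmin]
  set r : ℝ := x ^ ((1:ℝ)/4) with hr
  have hr1 : 1 ≤ r := Real.one_le_rpow hx (by norm_num)
  have hr0 : 0 < r := lt_of_lt_of_le one_pos hr1
  have hsqrt : Real.sqrt x = r ^ 2 := by
    rw [Real.sqrt_eq_rpow, hr, ← Real.rpow_natCast (x ^ ((1:ℝ)/4)) 2,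
      ← Real.rpow_mul hx0.le]
    norm_num
  have hx4 : x = r ^ 4 := by
    conv_lhs => rw [← Real.rpow_one x]
    rw [hr, ← Real.rpow_natCast (x ^ ((1:ℝ)/4)) 4, ← Real.rpow_mul hx0.le]
    norm_num
  have hinv : x ^ (v - 1) = (r⁻¹) ^ (4 * (1 - v)) := by
    rw [hr, ← Real.rpow_neg hx0.le, ← Real.rpow_mul hx0.le]
    ring_nf
  -- Bernoulli
  have hbern : (r⁻¹) ^ (4 * (1 - v)) ≤ 1 + (4 * (1 - v)) * (r⁻¹ - 1) := by
    have hs : (-1:ℝ) ≤ r⁻¹ - 1 := by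
      have : 0 < r⁻¹ := inv_pos.mpr hr0
      linarith
    have := rpow_one_add_le_one_add_mul_self hs (p := 4 * (1 - v))
      (by linarith) (by linarith)
    simpa using this
  have hkey : 4 * (1 - v) * (1 - r⁻¹) ≤ 1 - x ^ (v - 1) := by
    rw [hinv]; linarith
  -- reduce to polynomial inequality
  have hinv_le : r⁻¹ ≤ 1 := by
    rw [inv_le_one_iff₀]; right; exact hr1
  have hx1 : 0 ≤ x - 1 := by linarith
  have hrhs : v * (x - 1) * (4 * (1 - v) * (1 - r⁻¹)) / 2 ≤
      v * (x - 1) * (1 - x ^ (v - 1)) / 2 := by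
    have hv0' : 0 ≤ v := by linarith
    have := mul_le_mul_of_nonneg_left hkey (mul_nonneg hv0' hx1)
    linarith
  refine le_trans ?_ hrhs
  rw [hsqrt, hx4]
  have hrinv : r * r⁻¹ = 1 := mul_inv_cancel₀ hr0.ne'
  have hpoly : r * ((1 - v) * (1 - r ^ 2) ^ 2) ≤ v * (r ^ 4 - 1) * (4 * (1 - v) * (r - 1)) / 2 := by
    nlinarith [mul_nonneg (mul_nonneg (mul_nonneg (by linarith : (0:ℝ) ≤ 1 - v)
        (sq_nonneg (r - 1))) (by linarith : (0:ℝ) ≤ r + 1)) (by nlinarith : (0:ℝ) ≤ r ^ 2 - 2 * r + 3),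
      mul_nonneg (mul_nonneg (mul_nonneg (by linarith : (0:ℝ) ≤ v - 3 / 4)
        (by linarith : (0:ℝ) ≤ 1 - v)) (by nlinarith : (0:ℝ) ≤ r ^ 4 - 1)) (by linarith : (0:ℝ) ≤ r - 1)]
  have h1 : 1 - r⁻¹ = (r - 1) * r⁻¹ := by field_simp
  rw [h1]
  have h2 := mul_le_mul_of_nonneg_right hpoly (inv_pos.mpr hr0).le
  have e1 : r * ((1 - v) * (1 - r ^ 2) ^ 2) * r⁻¹ = (1 - v) * (1 - r ^ 2) ^ 2 := by
    field_simp
  have e2 : v * (r ^ 4 - 1) * (4 * (1 - v) * (r - 1)) / 2 * r⁻¹ =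
      v * (r ^ 4 - 1) * (4 * (1 - v) * ((r - 1) * r⁻¹)) / 2 := by ring
  rw [e1, e2] at h2
  exact h2
end

section
/- For x ≥ 1 and 2/3 ≤ v ≤ 1, we have max{v, 1-v} · (1 - √x)^2 ≥ v(x-1)(1 - ((x+1)/2)^(v-1)). -/
theorem wv_nonneg_high (x v : ℝ) (hx : 1 ≤ x) (hv0 : 2 / 3 ≤ v) (hv1 : v ≤ 1) :
    v * (x - 1) * (1 - ((x + 1) / 2) ^ (v - 1)) ≤ max v (1 - v) * (1 - Real.sqrt x) ^ 2 := by
  have hvpos : 0 < v := by linarith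
  rw [max_eq_left (by linarith : 1 - v ≤ v)]
  set s := Real.sqrt x with hs
  have hs0 : 0 ≤ s := Real.sqrt_nonneg x
  have hsx : s ^ 2 = x := Real.sq_sqrt (by linarith)
  have hs1 : (1:ℝ) ≤ s := by nlinarith
  set y : ℝ := (x + 1) / 2 with hy
  have hy1 : (1:ℝ) ≤ y := by simp [hy]; linarith
  set c : ℝ := y ^ ((1:ℝ)/3) with hc
  have hc0 : 0 < c := Real.rpow_pos_of_pos (by linarith) _
  have hc3 : c ^ (3:ℕ) = y := by
    rw [hc, ← Real.rpow_natCast (y ^ ((1:ℝ)/3)) 3, ← Real.rpow_mul (by linarith)]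
    norm_num
  -- key: 2 c ≤ s + 1
  have h2c : 2 * c ≤ s + 1 := by
    have h8 : (2 * c) ^ (3:ℕ) ≤ (s + 1) ^ (3:ℕ) := by
      have : (2*c)^(3:ℕ) = 8 * y := by ring_nf; nlinarith [hc3]
      rw [this]
      nlinarith [hsx, hs1]
    exact le_of_pow_le_pow_left₀ (by norm_num) (by linarith) h8
  -- lower bound on the rpow
  have ht : c⁻¹ ≤ y ^ (v - 1) := by
    have : y ^ (-(1/3) : ℝ) ≤ y ^ (v - 1) :=
      Real.rpow_le_rpow_of_exponent_le hy1 (by linarith)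
    rwa [Real.rpow_neg (by linarith), ← hc] at this
  have hx1 : 0 ≤ x - 1 := by linarith
  have key : (x - 1) * (1 - c⁻¹) ≤ (1 - s) ^ 2 := by
    have hcc : c * c⁻¹ = 1 := mul_inv_cancel₀ (ne_of_gt hc0)
    have hkey2 : (x - 1) * (c - 1) ≤ (1 - s) ^ 2 * c := by
      nlinarith [mul_le_mul_of_nonneg_left h2c (by linarith : (0:ℝ) ≤ s - 1)]
    have hinv : 0 ≤ c⁻¹ := by positivity
    calc (x - 1) * (1 - c⁻¹) = (x - 1) * (c - 1) * c⁻¹ := by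
          field_simp
        _ ≤ (1 - s) ^ 2 * c * c⁻¹ := by
          apply mul_le_mul_of_nonneg_right hkey2 hinv
        _ = (1 - s) ^ 2 := by rw [mul_assoc, hcc, mul_one]
  calc v * (x - 1) * (1 - y ^ (v - 1)) ≤ v * ((x - 1) * (1 - c⁻¹)) := by
        rw [mul_assoc]
        apply mul_le_mul_of_nonneg_left _ (le_of_lt hvpos)
        apply mul_le_mul_of_nonneg_left _ hx1
        linarith
      _ ≤ v * (1 - s) ^ 2 := mul_le_mul_of_nonneg_left key (le_of_lt hvpos)
end

section
/- For x ≥ 1 and 0 ≤ v ≤ 1/3, we have max{v, 1-v} · (1 - √x)^2 ≥ v(x-1)(1 - ((x+1)/2)^(v-1)). -/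
/-!
Put `t = (x + 1) / 2` and `p = 1 - v ∈ [0, 1]`. Concavity of `t ↦ t ^ p` (Bernoulli) gives
`t ^ p ≤ 1 + p (t - 1)`, hence `1 - t ^ (v - 1) ≤ a / (1 + a)` with `a = p (t - 1)`.
Writing `x = s ^ 2`, both `x - 1` and `a` carry a factor `s - 1`, and the remaining inequality is a
polynomial one, which reduces to `0 ≤ (s - 1) ^ 2 + 2` once `v ≤ 1 / 3`.
-/

open Real

lemma one_sub_rpow_neg_le {t p : ℝ} (ht : 0 < t) (hp0 : 0 ≤ p) (hp1 : p ≤ 1) :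
    1 - t ^ (-p) ≤ p * (t - 1) / (1 + p * (t - 1)) := by
  have hbernoulli : t ^ p ≤ 1 + p * (t - 1) := by
    simpa using rpow_one_add_le_one_add_mul_self (s := t - 1) (by linarith) hp0 hp1
  have hpos : 0 < 1 + p * (t - 1) := (rpow_pos_of_pos ht p).trans_le hbernoulli
  have hinv : (1 + p * (t - 1))⁻¹ ≤ t ^ (-p) := by
    rw [rpow_neg ht.le]
    exact inv_anti₀ (rpow_pos_of_pos ht p) hbernoulli
  calc 1 - t ^ (-p) ≤ 1 - (1 + p * (t - 1))⁻¹ := by linarith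
    _ = p * (t - 1) / (1 + p * (t - 1)) := by field_simp; ring

lemma mul_sq_sub_one_mul_le {s v : ℝ} (hv0 : 0 ≤ v) (hv1 : v ≤ 1 / 3) :
    v * (s ^ 2 - 1) * ((1 - v) * ((s ^ 2 - 1) / 2)) ≤
      (1 - v) * (1 - s) ^ 2 * (1 + (1 - v) * ((s ^ 2 - 1) / 2)) := by
  have hfactor : 0 ≤ (s ^ 2 + 1) - v * (2 * s ^ 2 + 2 * s) := by
    nlinarith [sq_nonneg (s - 1), sq_nonneg (s + 1 / 2)]
  have hweight : 0 ≤ (1 - v) * (1 - s) ^ 2 := mul_nonneg (by linarith) (sq_nonneg _)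
  nlinarith [mul_nonneg hweight hfactor]

theorem wv_nonneg_low (x v : ℝ) (hx : 1 ≤ x) (hv0 : 0 ≤ v) (hv1 : v ≤ 1 / 3) :
    v * (x - 1) * (1 - ((x + 1) / 2) ^ (v - 1)) ≤ max v (1 - v) * (1 - Real.sqrt x) ^ 2 := by
  rw [max_eq_right (by linarith)]
  obtain ⟨s, hs, rfl⟩ : ∃ s, 0 ≤ s ∧ x = s ^ 2 := ⟨√x, sqrt_nonneg x, (sq_sqrt (by linarith)).symm⟩
  rw [sqrt_sq hs]
  have hbound := one_sub_rpow_neg_le (t := (s ^ 2 + 1) / 2) (p := 1 - v)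
    (by positivity) (by linarith) (by linarith)
  rw [neg_sub, show (s ^ 2 + 1) / 2 - 1 = (s ^ 2 - 1) / 2 by ring] at hbound
  have hpos : 0 < 1 + (1 - v) * ((s ^ 2 - 1) / 2) := by nlinarith
  calc v * (s ^ 2 - 1) * (1 - ((s ^ 2 + 1) / 2) ^ (v - 1))
      ≤ v * (s ^ 2 - 1) * ((1 - v) * ((s ^ 2 - 1) / 2) / (1 + (1 - v) * ((s ^ 2 - 1) / 2))) :=
        mul_le_mul_of_nonneg_left hbound (mul_nonneg hv0 (by linarith))
    _ ≤ (1 - v) * (1 - s) ^ 2 := by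
        rw [mul_div_assoc', div_le_iff₀ hpos]
        exact mul_sq_sub_one_mul_le hv0 hv1
end

section
/- Let x ≥ 1, r ≥ 0, and 0 ≤ v ≤ 1. Then g_{r,v}(x) ≤ r x^v + (1-r)((1-v) + v x) ≤ G_{r,v}(x), where g_{r,v}(x) = v(x-1)(r((1+x)/2)^(v-1) + (1-r)) + 1 and G_{r,v}(x) = (v(x-1)/2)(r x^(v-1) + 2 - r) + 1. -/
open Real Set

private lemma mono_aux {f f' : ℝ → ℝ}
    (hd : ∀ t : ℝ, 0 < t → HasDerivAt f (f' t) t)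
    (hpos : ∀ t : ℝ, 1 < t → 0 ≤ f' t) {x : ℝ} (hx : 1 ≤ x) : f 1 ≤ f x := by
  have hmono : MonotoneOn f (Set.Ici 1) := by
    apply monotoneOn_of_deriv_nonneg (convex_Ici 1)
    · exact fun t ht => (hd t (lt_of_lt_of_le one_pos ht)).continuousAt.continuousWithinAt
    · intro t ht
      rw [interior_Ici] at ht
      exact ((hd t (lt_trans one_pos ht)).differentiableAt).differentiableWithinAt
    · intro t ht
      rw [interior_Ici] at ht
      rw [(hd t (lt_trans one_pos ht)).deriv]
      exact hpos t ht
  exact hmono self_mem_Ici hx hx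

/-- Bernoulli-type tangent line inequality for the convex function `t ↦ t ^ (-u)`. -/
private lemma tangent_aux {u m t : ℝ} (hu0 : 0 ≤ u) (hu1 : u ≤ 1) (hm : 0 < m)
    (hmt : m ≤ t) : m ^ (-u) - u * (t - m) * m ^ (-u - 1) ≤ t ^ (-u) := by
  set s : ℝ := t / m with hs
  have hs1 : 1 ≤ s := (one_le_div hm).2 hmt
  have hs0 : 0 < s := lt_of_lt_of_le one_pos hs1
  have hst : s * m = t := div_mul_cancel₀ t hm.ne'
  have key : 1 - u * (s - 1) ≤ s ^ (-u) := by
    have hb : s ^ u ≤ 1 + u * (s - 1) := by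
      have h := rpow_one_add_le_one_add_mul_self (s := s - 1) (by linarith) hu0 hu1
      rwa [show 1 + (s - 1) = s by ring] at h
    have hinv : s ^ u * s ^ (-u) = 1 := by
      rw [← Real.rpow_add hs0]; simp
    have hspos : 0 < s ^ (-u) := Real.rpow_pos_of_pos hs0 _
    have hc : 0 ≤ u * (s - 1) := mul_nonneg hu0 (by linarith)
    nlinarith [mul_le_mul_of_nonneg_right hb hspos.le, sq_nonneg (u * (s - 1))]
  have hmm : m ^ (-u - 1) * m = m ^ (-u) := by
    rw [← Real.rpow_add_one hm.ne', show -u - 1 + 1 = -u by ring]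
  have hts : t ^ (-u) = s ^ (-u) * m ^ (-u) := by
    rw [← hst, Real.mul_rpow hs0.le hm.le]
  have htm : t - m = (s - 1) * m := by rw [← hst]; ring
  have hmpos : 0 < m ^ (-u) := Real.rpow_pos_of_pos hm _
  have hx2 : u * (s - 1) * (m ^ (-u - 1) * m) = u * (s - 1) * m ^ (-u) := by rw [hmm]
  rw [hts, htm]
  nlinarith [mul_le_mul_of_nonneg_right key hmpos.le, hx2]

/-- lower bound: `1 + v (x-1) ((1+x)/2)^(v-1) ≤ x ^ v`. -/
private lemma key_lower {v : ℝ} (hv0 : 0 ≤ v) (hv1 : v ≤ 1) {x : ℝ} (hx : 1 ≤ x) :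
    v * (x - 1) * ((1 + x) / 2) ^ (v - 1) + 1 ≤ x ^ v := by
  have h := mono_aux
    (f := fun t : ℝ => t ^ v - v * ((t - 1) * ((1 + t) / 2) ^ (v - 1)) - 1)
    (f' := fun t : ℝ => v * t ^ (v - 1) -
      v * (1 * ((1 + t) / 2) ^ (v - 1) +
        (t - 1) * ((v - 1) * ((1 + t) / 2) ^ (v - 2) * (2⁻¹))))
    ?_ ?_ hx
  · norm_num [Real.one_rpow] at h
    nlinarith [h]
  · intro t ht
    have hm : (0:ℝ) < (1 + t) / 2 := by linarith
    have h1 : HasDerivAt (fun s : ℝ => s ^ v) (v * t ^ (v - 1)) t :=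
      Real.hasDerivAt_rpow_const (Or.inl ht.ne')
    have h2 : HasDerivAt (fun s : ℝ => (1 + s) / 2) (2⁻¹) t := by
      simpa using ((hasDerivAt_id t).const_add 1).div_const 2
    have h3 : HasDerivAt (fun s : ℝ => ((1 + s) / 2) ^ (v - 1))
        ((v - 1) * ((1 + t) / 2) ^ (v - 2) * (2⁻¹)) t := by
      have h := h2.rpow_const (p := v - 1) (Or.inl hm.ne')
      rw [show v - 1 - 1 = v - 2 by ring] at h
      convert h using 1
      ring
    have h4 : HasDerivAt (fun s : ℝ => (s - 1) * ((1 + s) / 2) ^ (v - 1))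
        (1 * ((1 + t) / 2) ^ (v - 1) +
          (t - 1) * ((v - 1) * ((1 + t) / 2) ^ (v - 2) * (2⁻¹))) t :=
      ((hasDerivAt_id t).sub_const 1).mul h3
    exact (h1.sub (h4.const_mul v)).sub_const 1
  · intro t ht
    have hm : (0:ℝ) < (1 + t) / 2 := by linarith
    have hmt : (1 + t) / 2 ≤ t := by linarith
    have htan := tangent_aux (u := 1 - v) (m := (1 + t) / 2) (t := t)
      (by linarith) (by linarith) hm hmt
    rw [show -(1 - v) = v - 1 by ring, show v - 1 - 1 = v - 2 by ring] at htan
    beta_reduce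
    nlinarith [mul_le_mul_of_nonneg_left htan hv0]

/-- upper bound: `x ^ v ≤ 1 + v (x-1)(1 + x^(v-1))/2`. -/
private lemma key_upper {v : ℝ} (hv0 : 0 ≤ v) (hv1 : v ≤ 1) {x : ℝ} (hx : 1 ≤ x) :
    x ^ v ≤ 1 + v * (x - 1) * (1 + x ^ (v - 1)) / 2 := by
  have h := mono_aux
    (f := fun t : ℝ => 1 + v * ((t - 1) * (1 + t ^ (v - 1))) / 2 - t ^ v)
    (f' := fun t : ℝ =>
      v * (1 * (1 + t ^ (v - 1)) + (t - 1) * ((v - 1) * t ^ (v - 2))) / 2 -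
        v * t ^ (v - 1))
    ?_ ?_ hx
  · norm_num [Real.one_rpow] at h
    nlinarith [h]
  · intro t ht
    have h1 : HasDerivAt (fun s : ℝ => s ^ v) (v * t ^ (v - 1)) t :=
      Real.hasDerivAt_rpow_const (Or.inl ht.ne')
    have h2 : HasDerivAt (fun s : ℝ => s ^ (v - 1)) ((v - 1) * t ^ (v - 2)) t := by
      have h := Real.hasDerivAt_rpow_const (x := t) (p := v - 1) (Or.inl ht.ne')
      rwa [show v - 1 - 1 = v - 2 by ring] at h
    have h4 : HasDerivAt (fun s : ℝ => (s - 1) * (1 + s ^ (v - 1)))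
        (1 * (1 + t ^ (v - 1)) + (t - 1) * ((v - 1) * t ^ (v - 2))) t :=
      ((hasDerivAt_id t).sub_const 1).mul (h2.const_add 1)
    exact (((h4.const_mul v).div_const 2).const_add 1).sub h1
  · intro t ht
    have ht0 : (0:ℝ) < t := lt_trans one_pos ht
    have hB : (0:ℝ) < t ^ (v - 2) := Real.rpow_pos_of_pos ht0 _
    have hmul : t ^ (v - 1) = t * t ^ (v - 2) := by
      have h := Real.rpow_add ht0 1 (v - 2)
      rw [Real.rpow_one] at h
      rw [show v - 1 = 1 + (v - 2) by ring, h]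
    have hBern : 1 + (2 - v) * (t - 1) ≤ t ^ (2 - v) := by
      have h := one_add_mul_self_le_rpow_one_add (s := t - 1) (by linarith) (p := 2 - v)
        (by linarith)
      rwa [show 1 + (t - 1) = t by ring] at h
    have h1 : t ^ (v - 2) * (1 + (2 - v) * (t - 1)) ≤ 1 :=
      calc t ^ (v - 2) * (1 + (2 - v) * (t - 1)) ≤ t ^ (v - 2) * t ^ (2 - v) :=
            mul_le_mul_of_nonneg_left hBern hB.le
        _ = 1 := by rw [← Real.rpow_add ht0]; norm_num
    beta_reduce
    rw [hmul]
    nlinarith [mul_le_mul_of_nonneg_left h1 hv0, mul_nonneg (mul_nonneg hv0 hB.le)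
      (sub_nonneg.2 ht.le)]

theorem heron_bounds_ge_one (x r v : ℝ) (hx : 1 ≤ x) (hr : 0 ≤ r)
    (hv0 : 0 ≤ v) (hv1 : v ≤ 1) :
    v * (x - 1) * (r * ((1 + x) / 2) ^ (v - 1) + (1 - r)) + 1
      ≤ r * x ^ v + (1 - r) * ((1 - v) + v * x) ∧
    r * x ^ v + (1 - r) * ((1 - v) + v * x)
      ≤ v * (x - 1) / 2 * (r * x ^ (v - 1) + 2 - r) + 1 := by
  have h1 := key_lower hv0 hv1 hx
  have h2 := key_upper hv0 hv1 hx
  constructor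
  · nlinarith [mul_le_mul_of_nonneg_left h1 hr]
  · nlinarith [mul_le_mul_of_nonneg_left h2 hr]
end

section
/- For t ≥ 1 and 0 ≤ v, r ≤ 1, we have ((1-v) + v t^(-1))^(-1) ≤ g_{r,v}(t), where g_{r,v}(t) = v(t-1)(r((1+t)/2)^(v-1) + (1-r)) + 1. -/
/-!
Write `D = (1 - v) t + v`, so that the left side is `t / D = 1 + v (t - 1) / D`. Since
`D ≥ 1` and, by Bernoulli's inequality, `((1 + t) / 2) ^ (1 - v) ≤ D`, the number `D⁻¹` lies
below both `1` and `((1 + t) / 2) ^ (v - 1)`, hence below every convex combination of them.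
-/

lemma inv_one_sub_add_mul_inv_eq {t v : ℝ} (ht : 0 < t) (hD : (1 - v) * t + v ≠ 0) :
    ((1 - v) + v * t⁻¹)⁻¹ = v * (t - 1) * ((1 - v) * t + v)⁻¹ + 1 := by
  field_simp
  ring

lemma one_le_one_sub_mul_add {t v : ℝ} (ht : 1 ≤ t) (hv1 : v ≤ 1) : 1 ≤ (1 - v) * t + v := by
  nlinarith

lemma midpoint_rpow_one_sub_le {t v : ℝ} (ht : 1 ≤ t) (hv0 : 0 ≤ v) (hv1 : v ≤ 1) :
    ((1 + t) / 2) ^ (1 - v) ≤ (1 - v) * t + v := by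
  calc ((1 + t) / 2) ^ (1 - v) = (1 + (t - 1) / 2) ^ (1 - v) := by ring_nf
    _ ≤ 1 + (1 - v) * ((t - 1) / 2) :=
      rpow_one_add_le_one_add_mul_self (by linarith) (by linarith) (by linarith)
    _ ≤ (1 - v) * t + v := by nlinarith

lemma inv_one_sub_mul_add_le_midpoint_rpow {t v : ℝ} (ht : 1 ≤ t) (hv0 : 0 ≤ v) (hv1 : v ≤ 1) :
    ((1 - v) * t + v)⁻¹ ≤ ((1 + t) / 2) ^ (v - 1) := by
  have hm : 0 < (1 + t) / 2 := by linarith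
  rw [← neg_sub 1 v, Real.rpow_neg hm.le]
  exact inv_anti₀ (by positivity) (midpoint_rpow_one_sub_le ht hv0 hv1)

lemma le_convex_comb_of_le_of_le_one {a x r : ℝ} (hx : a ≤ x) (h1 : a ≤ 1) (hr0 : 0 ≤ r)
    (hr1 : r ≤ 1) : a ≤ r * x + (1 - r) := by
  nlinarith [mul_le_mul_of_nonneg_left hx hr0, mul_le_mul_of_nonneg_left h1 (sub_nonneg.2 hr1)]

theorem harmonic_le_grv (t r v : ℝ) (ht : 1 ≤ t) (hv0 : 0 ≤ v) (hv1 : v ≤ 1)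
    (hr0 : 0 ≤ r) (hr1 : r ≤ 1) :
    ((1 - v) + v * t⁻¹)⁻¹ ≤ v * (t - 1) * (r * ((1 + t) / 2) ^ (v - 1) + (1 - r)) + 1 := by
  have hD : 1 ≤ (1 - v) * t + v := one_le_one_sub_mul_add ht hv1
  rw [inv_one_sub_add_mul_inv_eq (by linarith) (by positivity)]
  have hvt : 0 ≤ v * (t - 1) := mul_nonneg hv0 (by linarith)
  gcongr
  exact le_convex_comb_of_le_of_le_one (inv_one_sub_mul_add_le_midpoint_rpow ht hv0 hv1)
    (inv_le_one_of_one_le₀ hD) hr0 hr1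
end

section
/- For 0 < t ≤ 1 and 0 ≤ v, r ≤ 1, we have ((1-v) + v t^(-1))^(-1) ≤ t^v ≤ g_{r,v}(t), where g_{r,v}(t) = v(t-1)(r((1+t)/2)^(v-1) + (1-r)) + 1. -/
/-!
The harmonic–geometric inequality is weighted AM–GM for `1` and `t⁻¹`. The upper bound is the
convex combination, with weight `r`, of Bernoulli's bound `t ^ v ≤ 1 + v (t - 1)` and the midpoint
bound `t ^ v ≤ 1 + v (t - 1) ((1 + t) / 2) ^ (v - 1)`. The latter is the Hermite–Hadamard
inequality for the convex function `x ^ (v - 1)` on `[t, 1]`: the difference of its two sides is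
antitone, because its derivative is `v` times the gap in the tangent-line inequality for
`x ^ (v - 1)` at the midpoint `(1 + x) / 2`.
-/

open Real Set

namespace Real

theorem one_add_mul_self_le_rpow_one_add_of_nonpos {s q : ℝ} (hs : -1 < s) (hq0 : -1 ≤ q)
    (hq1 : q ≤ 0) : 1 + q * s ≤ (1 + s) ^ q := by
  have hbase : 0 < 1 + s := by linarith
  have hpos : 0 < 1 - q * s := by nlinarith [mul_nonneg (neg_nonneg.2 hq1) hbase.le]
  have hbern : (1 + s) ^ (-q) ≤ 1 - q * s := by
    simpa [neg_mul, ← sub_eq_add_neg] using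
      rpow_one_add_le_one_add_mul_self hs.le (neg_nonneg.2 hq1) (by linarith)
  calc 1 + q * s ≤ (1 - q * s)⁻¹ := by
        rw [← one_div, le_div_iff₀ hpos]
        nlinarith [sq_nonneg (q * s)]
    _ ≤ ((1 + s) ^ (-q))⁻¹ := inv_anti₀ (rpow_pos_of_pos hbase _) hbern
    _ = (1 + s) ^ q := by rw [rpow_neg hbase.le, inv_inv]

theorem rpow_add_mul_rpow_sub_one_mul_sub_le {x m q : ℝ} (hx : 0 < x) (hm : 0 < m)
    (hq0 : -1 ≤ q) (hq1 : q ≤ 0) : m ^ q + q * m ^ (q - 1) * (x - m) ≤ x ^ q := by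
  have hbern := one_add_mul_self_le_rpow_one_add_of_nonpos (s := x / m - 1)
    (by linarith [div_pos hx hm]) hq0 hq1
  rw [add_sub_cancel, div_rpow hx.le hm.le, le_div_iff₀ (rpow_pos_of_pos hm q)] at hbern
  calc m ^ q + q * m ^ (q - 1) * (x - m) = (1 + q * (x / m - 1)) * m ^ q := by
        rw [rpow_sub_one hm.ne']; field_simp
    _ ≤ x ^ q := hbern

end Real

section Midpoint

variable {v : ℝ}

theorem hasDerivAt_one_add_mul_sub_one_mul_midpoint_rpow_sub_rpow {x : ℝ} (hx : 0 < x) :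
    HasDerivAt (fun y => 1 + v * (y - 1) * ((1 + y) / 2) ^ (v - 1) - y ^ v)
      (v * (((1 + x) / 2) ^ (v - 1) + (v - 1) * ((1 + x) / 2) ^ (v - 1 - 1) * (x - (1 + x) / 2)
        - x ^ (v - 1))) x := by
  have hmid : HasDerivAt (fun y : ℝ => (1 + y) / 2) 2⁻¹ x := by
    simpa using ((hasDerivAt_id x).const_add 1).div_const 2
  have hmid_rpow := (hasDerivAt_rpow_const (p := v - 1) (Or.inl (by positivity))).comp x hmid
  have h := ((((hasDerivAt_id x).sub_const 1).const_mul v).mul hmid_rpow).const_add 1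
  refine (h.sub (hasDerivAt_rpow_const (p := v) (Or.inl hx.ne'))).congr_deriv ?_
  simp only [Function.comp_apply, id]
  ring

theorem rpow_le_one_add_mul_sub_one_mul_midpoint_rpow {t : ℝ} (ht0 : 0 < t) (ht1 : t ≤ 1)
    (hv0 : 0 ≤ v) (hv1 : v ≤ 1) : t ^ v ≤ 1 + v * (t - 1) * ((1 + t) / 2) ^ (v - 1) := by
  set F : ℝ → ℝ := fun y => 1 + v * (y - 1) * ((1 + y) / 2) ^ (v - 1) - y ^ v
  have hderiv : ∀ x, 0 < x → HasDerivAt F _ x := fun x hx =>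
    hasDerivAt_one_add_mul_sub_one_mul_midpoint_rpow_sub_rpow hx
  have hanti : AntitoneOn F (Icc t 1) := by
    refine antitoneOn_of_hasDerivWithinAt_nonpos (convex_Icc t 1)
      (fun x hx => (hderiv x (ht0.trans_le hx.1)).continuousAt.continuousWithinAt)
      (fun x hx => (hderiv x (ht0.trans (interior_Icc.subset hx).1)).hasDerivWithinAt) ?_
    intro x hx
    rw [interior_Icc] at hx
    have hx0 : 0 < x := ht0.trans hx.1
    have htangent := rpow_add_mul_rpow_sub_one_mul_sub_le hx0
      (by linarith : 0 < (1 + x) / 2) (by linarith : -1 ≤ v - 1) (by linarith)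
    exact mul_nonpos_of_nonneg_of_nonpos hv0 (by linarith)
  have hF := hanti ⟨le_rfl, ht1⟩ ⟨ht1, le_rfl⟩ ht1
  simp only [F, sub_self, mul_zero, zero_mul, add_zero, one_rpow] at hF
  linarith

end Midpoint

theorem inv_one_sub_add_mul_inv_le_rpow {t v : ℝ} (ht : 0 < t) (hv0 : 0 ≤ v) (hv1 : v ≤ 1) :
    ((1 - v) + v * t⁻¹)⁻¹ ≤ t ^ v := by
  have hamgm : (t ^ v)⁻¹ ≤ (1 - v) + v * t⁻¹ := by
    simpa [inv_rpow ht.le] using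
      geom_mean_le_arith_mean2_weighted (p₁ := 1) (p₂ := t⁻¹) (by linarith) hv0 zero_le_one
        (inv_nonneg.2 ht.le) (by ring)
  have hinv_pos : 0 < (t ^ v)⁻¹ := by positivity
  exact (inv_le_comm₀ (hinv_pos.trans_le hamgm) (rpow_pos_of_pos ht v)).2 hamgm

theorem harmonic_le_pow_le_grv (t r v : ℝ) (ht0 : 0 < t) (ht1 : t ≤ 1)
    (hv0 : 0 ≤ v) (hv1 : v ≤ 1) (hr0 : 0 ≤ r) (hr1 : r ≤ 1) :
    ((1 - v) + v * t⁻¹)⁻¹ ≤ t ^ v ∧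
    t ^ v ≤ v * (t - 1) * (r * ((1 + t) / 2) ^ (v - 1) + (1 - r)) + 1 := by
  refine ⟨inv_one_sub_add_mul_inv_le_rpow ht0 hv0 hv1, ?_⟩
  have hmid := rpow_le_one_add_mul_sub_one_mul_midpoint_rpow ht0 ht1 hv0 hv1
  have hbern : t ^ v ≤ 1 + v * (t - 1) := by
    simpa using rpow_one_add_le_one_add_mul_self (s := t - 1) (by linarith) hv0 hv1
  linarith [mul_le_mul_of_nonneg_left hmid hr0, mul_le_mul_of_nonneg_left hbern (sub_nonneg.2 hr1)]
end

section
/- Let c = (2^7 - 1)/5^4 = 127/625. For 0 ≤ r, v ≤ 1 and c ≤ t ≤ 1, we have ((1-v) + v t^(-1))^(-1) ≤ G_{r,v}(t), where G_{r,v}(t) = (v(t-1)/2)(r t^(v-1) + 2 - r) + 1. -/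
/-!
Put `D = (1 - v) t + v` and `A = t ^ (v - 1) ≥ 1`. The left side is `t / D`, and since
`(t - 1)(A - 1) ≤ 0` the right side decreases in `r`, so it suffices to take `r = 1`; then the
claim reduces to `A D ≤ 2 - D`. With `x = (1 - v)(1 - t) ≥ 0` we have `D = 1 - x`, and on
`[127/625, 1]` the chord bound `log t ≥ 2 (t - 1)` gives `A ≤ exp (2 x)`; finally
`(1 - x) exp (2 x) ≤ 1 + x` is the first term of the series of `log (1 + x) - log (1 - x)`.
The constant `127/625` lies just above the root of `log t = 2 (t - 1)` in `(0, 1)`.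
-/

open Real Set

namespace Real

theorem two_mul_le_log_one_add_sub_log_one_sub {x : ℝ} (hx0 : 0 ≤ x) (hx1 : x < 1) :
    2 * x ≤ log (1 + x) - log (1 - x) := by
  have hsum := hasSum_log_sub_log_of_abs_lt_one (abs_lt.2 ⟨by linarith, hx1⟩)
  simpa using le_hasSum hsum 0 fun k _ => by positivity

theorem one_sub_mul_exp_two_mul_le {x : ℝ} (hx : 0 ≤ x) : (1 - x) * exp (2 * x) ≤ 1 + x := by
  rcases lt_or_ge x 1 with hx1 | hx1
  · calc (1 - x) * exp (2 * x) ≤ (1 - x) * exp (log (1 + x) - log (1 - x)) := by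
          gcongr
          exact two_mul_le_log_one_add_sub_log_one_sub hx hx1
      _ = 1 + x := by
          have hpos : 0 < 1 - x := by linarith
          rw [exp_sub, exp_log (by linarith), exp_log hpos]
          field_simp
  · nlinarith [exp_pos (2 * x)]

theorem mul_sub_one_le_log_of_mem_Icc {k c t : ℝ} (hc : 0 < c) (hlog : k * (c - 1) ≤ log c)
    (ht : t ∈ Icc c 1) : k * (t - 1) ≤ log t := by
  have haff : ConvexOn ℝ (Ioi 0) fun s => k * (s - 1) :=
    ⟨convex_Ioi 0, fun x _ y _ a b _ _ hab => le_of_eq <| by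
      simp only [smul_eq_mul]; linear_combination k * hab⟩
  have hmin := (strictConcaveOn_log_Ioi.concaveOn.sub haff).min_le_of_mem_Icc
    (mem_Ioi.2 hc) (mem_Ioi.2 one_pos) ht
  simp only [Pi.sub_apply, log_one, sub_self, mul_zero, min_le_iff] at hmin
  rcases hmin with h | h <;> linarith

theorem two_mul_sub_one_le_log_127_div_625 : 2 * (127 / 625 - 1) ≤ log (127 / 625) := by
  have hexp : (625 : ℝ) / 127 ≤ exp (996 / 625) := by
    refine le_trans ?_ (sum_le_exp_of_nonneg (by norm_num) 12)
    norm_num [Finset.sum_range_succ, Nat.factorial]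
  have := (log_le_iff_le_exp (by norm_num)).2 hexp
  rw [← inv_div, log_inv]
  linarith

theorem rpow_sub_one_mul_le {t v : ℝ} (ht0 : 0 < t) (ht1 : t ≤ 1) (hlog : 2 * (t - 1) ≤ log t)
    (hv0 : 0 ≤ v) (hv1 : v ≤ 1) :
    t ^ (v - 1) * ((1 - v) * t + v) ≤ 2 - ((1 - v) * t + v) := by
  set x := (1 - v) * (1 - t) with hx
  have hx0 : 0 ≤ x := mul_nonneg (by linarith) (by linarith)
  have hle : t ^ (v - 1) ≤ exp (2 * x) := by
    rw [rpow_def_of_pos ht0, exp_le_exp]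
    nlinarith
  calc t ^ (v - 1) * ((1 - v) * t + v) = t ^ (v - 1) * (1 - x) := by ring
    _ ≤ exp (2 * x) * (1 - x) := by gcongr; nlinarith
    _ ≤ 1 + x := by rw [mul_comm]; exact one_sub_mul_exp_two_mul_le hx0
    _ = 2 - ((1 - v) * t + v) := by ring

end Real

theorem harmonic_le_Grv_general (t r v : ℝ) (hr1 : r ≤ 1)
    (hv0 : 0 ≤ v) (hv1 : v ≤ 1) (ht0 : (127 : ℝ) / 625 ≤ t) (ht1 : t ≤ 1) :
    ((1 - v) + v * t⁻¹)⁻¹ ≤ v * (t - 1) / 2 * (r * t ^ (v - 1) + 2 - r) + 1 := by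
  have htpos : 0 < t := by linarith
  have hlog : 2 * (t - 1) ≤ log t :=
    mul_sub_one_le_log_of_mem_Icc (by norm_num) two_mul_sub_one_le_log_127_div_625 ⟨ht0, ht1⟩
  set A := t ^ (v - 1)
  set D := (1 - v) * t + v
  have hA : 1 ≤ A := one_le_rpow_of_pos_of_le_one_of_nonpos htpos ht1 (by linarith)
  have hD : 0 < D := by nlinarith
  have hkey : A * D ≤ 2 - D := rpow_sub_one_mul_le htpos ht1 hlog hv0 hv1
  have hlhs : (1 - v) + v * t⁻¹ = D / t := by field_simp; ring
  rw [hlhs, inv_div, div_le_iff₀ hD]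
  have hr : (r * A + 2 - r) * D ≤ 2 := by nlinarith [mul_nonneg (sub_nonneg.2 hA) hD.le]
  nlinarith [mul_nonneg (mul_nonneg hv0 (sub_nonneg.2 ht1)) (sub_nonneg.2 hr)]

theorem harmonic_le_Grv (t r v : ℝ) (hr0 : 0 ≤ r) (hr1 : r ≤ 1)
    (hv0 : 0 ≤ v) (hv1 : v ≤ 1) (ht0 : (127 : ℝ) / 625 ≤ t) (ht1 : t ≤ 1) :
    ((1 - v) + v * t⁻¹)⁻¹ ≤ v * (t - 1) / 2 * (r * t ^ (v - 1) + 2 - r) + 1 :=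
  harmonic_le_Grv_general t r v hr1 hv0 hv1 ht0 ht1
end
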